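/- There is no C² function φ defined on a neighborhood of a point p₀ = (0, z₂⁰) ∈ ℂ² such that φ(0,z₂⁰) = 0 and φ(z₁,z₂) ≥ -(Re z₂)²/log|z₁| + 2|z₁|²(1 - log|z₁|) for all (z₁,z₂) in that neighborhood with z₁ ≠ 0. In particular, setting z₂ = z₂⁰, no C² function of z₁ near 0 can satisfy ψ(z₁) ≥ ψ(0) + 2|z₁|²(1 - log|z₁|). -/

import Mathlib

/-!
A `C²` function has second symmetric differences `ψ(x + h) + ψ(x - h) - 2ψ(x) = O(‖h‖²)`, whereas
a lower bound `ψ(x + h) ≥ ψ(x) + g(‖h‖)` forces them to be at least `2g(‖h‖)`. For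
`g(r) = 2r²(1 - log r)` the ratio `g(r)/r²` is unbounded as `r → 0⁺`. For `φ`, restrict to the slice
`z₂ = z₂⁰`: there `-(Re z₂)²/log|z₁| ≥ 0` once `|z₁| < 1`.
-/

open Filter Topology Asymptotics Metric

variable {E F : Type*} [NormedAddCommGroup E] [NormedSpace ℝ E]
  [NormedAddCommGroup F] [NormedSpace ℝ F]

theorem ContDiffAt.isBigO_sub_sub_fderiv {f : E → F} {x : E} (hf : ContDiffAt ℝ 2 f x) :
    (fun y => f y - f x - fderiv ℝ f x (y - x)) =O[𝓝 x] fun y => ‖y - x‖ ^ 2 := by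
  obtain ⟨K, t, ht, hlip⟩ := (hf.fderiv_right (m := 1) (by norm_num)).exists_lipschitzOnWith
  have hdiff : ∀ᶠ y in 𝓝 x, DifferentiableAt ℝ f y :=
    (hf.eventually (by simp)).mono fun y hy => hy.differentiableAt (by norm_num)
  obtain ⟨r, hr, hball⟩ := Metric.mem_nhds_iff.1 (inter_mem ht hdiff)
  refine .of_bound K (mem_of_superset (ball_mem_nhds x hr) fun y hy => ?_)
  set s := closedBall x ‖y - x‖
  have hsub : s ⊆ ball x r := closedBall_subset_ball (by rwa [← dist_eq_norm])
  have hx : x ∈ s := mem_closedBall_self (norm_nonneg _)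
  have hderiv : ∀ z ∈ s, ‖fderiv ℝ f z - fderiv ℝ f x‖ ≤ K * ‖y - x‖ := fun z hz => by
    rw [← dist_eq_norm]
    exact (hlip.dist_le_mul z (hball (hsub hz)).1 x (hball (hsub hx)).1).trans
      (mul_le_mul_of_nonneg_left hz K.2)
  have hmean := (convex_closedBall x ‖y - x‖).norm_image_sub_le_of_norm_fderiv_le'
    (fun z hz => (hball (hsub hz)).2) hderiv hx (mem_closedBall.2 (dist_eq_norm y x).le)
  simpa [pow_two, mul_assoc] using hmean

theorem ContDiffAt.isBigO_symmetric_second_difference {f : E → F} {x : E}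
    (hf : ContDiffAt ℝ 2 f x) :
    (fun h => f (x + h) + f (x - h) - (2 : ℝ) • f x) =O[𝓝 0] fun h => ‖h‖ ^ 2 := by
  have hT := hf.isBigO_sub_sub_fderiv
  have hplus : (fun h => f (x + h) - f x - fderiv ℝ f x h) =O[𝓝 0] fun h => ‖h‖ ^ 2 := by
    simpa [Function.comp_def] using
      hT.comp_tendsto ((continuous_const.add continuous_id).tendsto' 0 x (add_zero x))
  have hminus : (fun h => f (x - h) - f x + fderiv ℝ f x h) =O[𝓝 0] fun h => ‖h‖ ^ 2 := by
    simpa [Function.comp_def] using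
      hT.comp_tendsto ((continuous_const.sub continuous_id).tendsto' 0 x (sub_zero x))
  refine (hplus.add hminus).congr_left fun h => ?_
  rw [two_smul]
  abel

theorem ContDiffAt.not_eventually_add_le_of_tendsto_div_sq_atTop [Nontrivial E] {ψ : E → ℝ}
    {x : E} (hψ : ContDiffAt ℝ 2 ψ x) {g : ℝ → ℝ}
    (hg : Tendsto (fun r => g r / r ^ 2) (𝓝[>] 0) atTop) :
    ¬ ∀ᶠ h in 𝓝[≠] 0, ψ x + g ‖h‖ ≤ ψ (x + h) := by
  intro hle
  obtain ⟨K, hK⟩ := hψ.isBigO_symmetric_second_difference.bound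
  rw [eventually_nhdsWithin_iff] at hle
  have hle_neg := (continuous_neg.tendsto' 0 0 neg_zero).eventually hle
  have hlarge := (hg.comp (tendsto_norm_nhdsNE_zero (E := E))).eventually_gt_atTop (K / 2)
  obtain ⟨h, ⟨hplus, hminus, hbound⟩, hgh, hh⟩ := ((hle.and (hle_neg.and hK)).filter_mono
    nhdsWithin_le_nhds |>.and (hlarge.and self_mem_nhdsWithin)).exists
  have hpos : 0 < ‖h‖ := norm_pos_iff.2 hh
  replace hplus := hplus hh
  replace hminus := hminus (neg_ne_zero.2 hh)
  replace hgh : K / 2 * ‖h‖ ^ 2 < g ‖h‖ := (lt_div_iff₀ (pow_pos hpos 2)).1 hgh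
  rw [norm_neg, ← sub_eq_add_neg] at hminus
  simp only [smul_eq_mul, norm_pow, Real.norm_eq_abs, abs_norm] at hbound
  linarith [le_abs_self (ψ (x + h) + ψ (x - h) - 2 * ψ x)]

theorem tendsto_two_mul_sq_mul_one_sub_log_div_sq :
    Tendsto (fun r => 2 * r ^ 2 * (1 - Real.log r) / r ^ 2) (𝓝[>] 0) atTop := by
  have hlim : Tendsto (fun r => 2 * (1 - Real.log r)) (𝓝[>] 0) atTop :=
    (tendsto_atTop_add_const_left _ 1 (tendsto_neg_atBot_atTop.comp
      Real.tendsto_log_nhdsGT_zero)).const_mul_atTop two_pos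
  refine hlim.congr' (eventually_nhdsWithin_of_forall fun r hr => ?_)
  field_simp [(Set.mem_Ioi.1 hr).ne']

theorem no_upper_test_function :
    (∀ z₂0 : ℂ, ¬ ∃ (N : Set (ℂ × ℂ)) (φ : ℂ × ℂ → ℝ),
      N ∈ nhds ((0 : ℂ), z₂0) ∧ ContDiffOn ℝ 2 φ N ∧ φ (0, z₂0) = 0 ∧
      ∀ p ∈ N, p.1 ≠ 0 →
        -(p.2.re) ^ 2 / Real.log (‖p.1‖)
          + 2 * (‖p.1‖) ^ 2 * (1 - Real.log (‖p.1‖)) ≤ φ p) ∧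
    (∀ (ψ : ℂ → ℝ) (N : Set ℂ), N ∈ nhds (0 : ℂ) → ContDiffOn ℝ 2 ψ N →
      ¬ ∀ z ∈ N, z ≠ 0 →
        ψ 0 + 2 * (‖z‖) ^ 2 * (1 - Real.log (‖z‖)) ≤ ψ z) := by
  have key (ψ : ℂ → ℝ) (hψ : ContDiffAt ℝ 2 ψ 0) :
      ¬ ∀ᶠ z in 𝓝[≠] 0, ψ 0 + 2 * ‖z‖ ^ 2 * (1 - Real.log ‖z‖) ≤ ψ z := by
    simpa using hψ.not_eventually_add_le_of_tendsto_div_sq_atTop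
      tendsto_two_mul_sq_mul_one_sub_log_div_sq
  constructor
  · rintro z₂0 ⟨N, φ, hN, hφ, hφ0, hle⟩
    have hslice : Tendsto (fun z : ℂ => (z, z₂0)) (𝓝 0) (𝓝 (0, z₂0)) :=
      (continuous_id.prodMk continuous_const).tendsto 0
    refine key (fun z => φ (z, z₂0))
      ((hφ.contDiffAt hN).comp 0 (contDiffAt_id.prodMk contDiffAt_const)) ?_
    rw [eventually_nhdsWithin_iff]
    filter_upwards [hslice.eventually hN, ball_mem_nhds (0 : ℂ) one_pos] with z hzN hz1 hz0
    have hlog : Real.log ‖z‖ < 0 :=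
      Real.log_neg (norm_pos_iff.2 hz0) (by simpa using hz1)
    have hbarrier := hle _ hzN hz0
    rw [hφ0]
    linarith [div_nonneg_of_nonpos (neg_nonpos.2 (sq_nonneg z₂0.re)) hlog.le]
  · intro ψ N hN hψ hle
    exact key ψ (hψ.contDiffAt hN) (eventually_nhdsWithin_iff.2 (mem_of_superset hN hle))
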